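/- Let T be the d-regular rooted tree, D ≥ 1, and let P, Q ≤ Aut(T^D) be minimal pattern subgroups. Suppose there exists g ∈ Aut(T) such that: (a) for every vertex v of T, (g|_v^D) P (g|_v^D)^{-1} = Q; and (b) for every n ≥ 1 and all vertices v, w of level n, (g|_v^D)(g|_w^D)^{-1} ∈ Q. Then conjugation by g maps G_P onto G_Q, i.e. g G_P g^{-1} = G_Q; in particular G_P and G_Q are isomorphic as topological groups. -/

import Mathlib

namespace TreeFT

/-- Vertices of the `d`-regular rooted tree: finite words over `Fin d`. -/
abbrev Vertex (d : ℕ) := List (Fin d)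

/-- The automorphism group of the `d`-regular rooted tree, realized as the subgroup of
permutations of the vertex set that preserve length (levels) and prefixes (adjacency). -/
def treeAut (d : ℕ) : Subgroup (Equiv.Perm (Vertex d)) where
  carrier := {g | (∀ v : Vertex d, (g v).length = v.length) ∧
      (∀ v w : Vertex d, (g (v ++ w)).take v.length = g v)}
  one_mem' := ⟨fun _ => rfl, fun v w => List.take_left⟩
  mul_mem' := by
    rintro g h ⟨hg1, hg2⟩ ⟨hh1, hh2⟩
    refine ⟨fun v => by rw [Equiv.Perm.mul_apply, hg1, hh1], fun v w => ?_⟩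
    have h1 : h (v ++ w) = h v ++ (h (v ++ w)).drop v.length := by
      conv_lhs => rw [← List.take_append_drop v.length (h (v ++ w))]
      rw [hh2]
    rw [Equiv.Perm.mul_apply, Equiv.Perm.mul_apply, h1]
    have h2 : v.length = (h v).length := (hh1 v).symm
    rw [h2]
    exact hg2 _ _
  inv_mem' := by
    rintro g ⟨hg1, hg2⟩
    constructor
    · intro v
      have h := hg1 (g⁻¹ v)
      rw [← Equiv.Perm.mul_apply, mul_inv_cancel, Equiv.Perm.one_apply] at h
      exact h.symm
    · intro v w
      apply g.injective
      have hlen : v.length ≤ (g⁻¹ (v ++ w)).length := by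
        have h := hg1 (g⁻¹ (v ++ w))
        rw [← Equiv.Perm.mul_apply, mul_inv_cancel, Equiv.Perm.one_apply] at h
        rw [← h, List.length_append]
        exact Nat.le_add_right _ _
      have h3 := hg2 ((g⁻¹ (v ++ w)).take v.length) ((g⁻¹ (v ++ w)).drop v.length)
      rw [List.take_append_drop, ← Equiv.Perm.mul_apply, mul_inv_cancel, Equiv.Perm.one_apply, List.length_take,
        min_eq_left hlen, List.take_left] at h3
      rw [← h3, ← Equiv.Perm.mul_apply, mul_inv_cancel, Equiv.Perm.one_apply]

variable {d : ℕ}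

/-- `Aut(T)` as a type. -/
abbrev TAut (d : ℕ) := ↥(treeAut d)

lemma length_apply (g : TAut d) (v : Vertex d) :
    ((g : Equiv.Perm (Vertex d)) v).length = v.length := g.2.1 v

lemma take_apply (g : TAut d) (v w : Vertex d) :
    ((g : Equiv.Perm (Vertex d)) (v ++ w)).take v.length = (g : Equiv.Perm (Vertex d)) v :=
  g.2.2 v w

lemma apply_append (g : TAut d) (v w : Vertex d) :
    (g : Equiv.Perm (Vertex d)) (v ++ w) =
      (g : Equiv.Perm (Vertex d)) v ++ ((g : Equiv.Perm (Vertex d)) (v ++ w)).drop v.length := by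
  conv_lhs => rw [← List.take_append_drop v.length ((g : Equiv.Perm (Vertex d)) (v ++ w))]
  rw [take_apply]

/-- The section `g|_v` of a tree automorphism at the vertex `v`. -/
def sect (g : TAut d) (v : Vertex d) : TAut d :=
  ⟨{ toFun := fun w => ((g : Equiv.Perm (Vertex d)) (v ++ w)).drop v.length
     invFun := fun w =>
       (((g : Equiv.Perm (Vertex d)))⁻¹ ((g : Equiv.Perm (Vertex d)) v ++ w)).drop v.length
     left_inv := by
       intro w
       show ((g : Equiv.Perm (Vertex d))⁻¹
         ((g : Equiv.Perm (Vertex d)) v ++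
           ((g : Equiv.Perm (Vertex d)) (v ++ w)).drop v.length)).drop v.length = w
       rw [← apply_append g v w, ← Equiv.Perm.mul_apply, inv_mul_cancel, Equiv.Perm.one_apply, List.drop_left]
     right_inv := by
       intro w
       show ((g : Equiv.Perm (Vertex d))
         (v ++ ((g : Equiv.Perm (Vertex d))⁻¹
           ((g : Equiv.Perm (Vertex d)) v ++ w)).drop v.length)).drop v.length = w
       have h2 := apply_append g⁻¹ ((g : Equiv.Perm (Vertex d)) v) w
       simp only [InvMemClass.coe_inv] at h2
       rw [← Equiv.Perm.mul_apply, inv_mul_cancel, Equiv.Perm.one_apply, length_apply] at h2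
       rw [← h2, ← Equiv.Perm.mul_apply, mul_inv_cancel, Equiv.Perm.one_apply, ← length_apply g v, List.drop_left] },
   by
    constructor
    · intro w
      simp only [Equiv.coe_fn_mk, List.length_drop, length_apply, List.length_append]
      omega
    · intro w u
      simp only [Equiv.coe_fn_mk]
      rw [← List.append_assoc]
      have h0 : ((g : Equiv.Perm (Vertex d)) ((v ++ w) ++ u)).take (v ++ w).length
          = (g : Equiv.Perm (Vertex d)) (v ++ w) := take_apply g (v ++ w) u
      have h1 : w.length = (v.length + w.length) - v.length := by omega
      rw [h1, ← List.drop_take, ← List.length_append, h0]⟩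

lemma sect_apply (g : TAut d) (v w : Vertex d) :
    ((sect g v : TAut d) : Equiv.Perm (Vertex d)) w
      = ((g : Equiv.Perm (Vertex d)) (v ++ w)).drop v.length := rfl

lemma sect_mul (g h : TAut d) (v : Vertex d) :
    sect (g * h) v = sect g ((h : Equiv.Perm (Vertex d)) v) * sect h v := by
  apply Subtype.ext
  apply Equiv.ext
  intro w
  simp only [MulMemClass.coe_mul, Equiv.Perm.mul_apply, sect_apply]
  rw [← apply_append h v w, length_apply]

lemma sect_one (v : Vertex d) : sect (1 : TAut d) v = 1 := by
  apply Subtype.ext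
  apply Equiv.ext
  intro w
  simp only [sect_apply, OneMemClass.coe_one, Equiv.Perm.coe_one, id_eq]
  exact List.drop_left

end TreeFT
namespace TreeFT

variable {d : ℕ}

/-- The stabilizer `St(n)` of the `n`-th level: automorphisms acting trivially on the first
`n` levels of the tree. -/
def lst (d n : ℕ) : Subgroup (TAut d) where
  carrier := {g | ∀ v : Vertex d, v.length ≤ n → (g : Equiv.Perm (Vertex d)) v = v}
  one_mem' := fun _ _ => rfl
  mul_mem' := by
    intro g h hg hh v hv
    show (g : Equiv.Perm (Vertex d)) ((h : Equiv.Perm (Vertex d)) v) = v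
    rw [hh v hv, hg v hv]
  inv_mem' := by
    intro g hg v hv
    show ((g : Equiv.Perm (Vertex d)))⁻¹ v = v
    apply (g : Equiv.Perm (Vertex d)).injective
    rw [← Equiv.Perm.mul_apply, mul_inv_cancel, Equiv.Perm.one_apply, hg v hv]

lemma mem_lst {g : TAut d} {n : ℕ} :
    g ∈ lst d n ↔ ∀ v : Vertex d, v.length ≤ n → (g : Equiv.Perm (Vertex d)) v = v :=
  Iff.rfl

instance lst_normal (d n : ℕ) : (lst d n).Normal := by
  constructor
  intro s hs g v hv
  show (g : Equiv.Perm (Vertex d))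
    ((s : Equiv.Perm (Vertex d)) (((g : Equiv.Perm (Vertex d)))⁻¹ v)) = v
  have h1 : ((g⁻¹ : TAut d) : Equiv.Perm (Vertex d)) v = ((g : Equiv.Perm (Vertex d)))⁻¹ v := by
    simp
  have h2 : (((g : Equiv.Perm (Vertex d)))⁻¹ v).length ≤ n := by
    rw [← h1, length_apply]; exact hv
  rw [hs _ h2, ← Equiv.Perm.mul_apply, mul_inv_cancel, Equiv.Perm.one_apply]

/-- `Aut(T^n)`, the automorphism group of the finite tree consisting of the first `n` levels,
realized as the quotient of `Aut(T)` by the `n`-th level stabilizer. -/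
abbrev FAut (d n : ℕ) := TAut d ⧸ lst d n

/-- `π_n : Aut(T) → Aut(T^n)`, restriction to the first `n` levels. -/
def proj (d n : ℕ) : TAut d →* FAut d n := QuotientGroup.mk' (lst d n)

lemma proj_surjective (d n : ℕ) : Function.Surjective (proj d n) :=
  QuotientGroup.mk'_surjective _

/-- The group of finite type `G_P` of depth `D` with pattern group `P ≤ Aut(T^D)`:
all tree automorphisms whose section at every vertex acts on the first `D` levels as an
element of `P`. -/
def gft (d D : ℕ) (P : Subgroup (FAut d D)) : Subgroup (TAut d) where
  carrier := {g | ∀ v : Vertex d, proj d D (sect g v) ∈ P}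
  one_mem' := by
    intro v
    rw [sect_one, map_one]
    exact one_mem P
  mul_mem' := by
    intro g h hg hh v
    rw [sect_mul, map_mul]
    exact mul_mem (hg _) (hh _)
  inv_mem' := by
    intro g hg v
    have h2 : sect g (((g⁻¹ : TAut d) : Equiv.Perm (Vertex d)) v) * sect g⁻¹ v = 1 := by
      rw [← sect_mul, mul_inv_cancel, sect_one]
    have h3 : sect g⁻¹ v = (sect g (((g⁻¹ : TAut d) : Equiv.Perm (Vertex d)) v))⁻¹ :=
      (inv_eq_of_mul_eq_one_right h2).symm
    rw [h3, map_inv]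
    exact inv_mem (hg _)

lemma mem_gft {g : TAut d} {D : ℕ} {P : Subgroup (FAut d D)} :
    g ∈ gft d D P ↔ ∀ v : Vertex d, proj d D (sect g v) ∈ P := Iff.rfl

/-- `P ≤ Aut(T^D)` is a minimal pattern subgroup if `π_D(G_P) = P`. -/
def IsMinimalPattern (d D : ℕ) (P : Subgroup (FAut d D)) : Prop :=
  (gft d D P).map (proj d D) = P

/-- A subgroup of `Aut(T)` is level-transitive if it acts transitively on every level. -/
def LevelTransitive (H : Subgroup (TAut d)) : Prop :=
  ∀ v w : Vertex d, v.length = w.length → ∃ g ∈ H, (g : Equiv.Perm (Vertex d)) v = w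

/-- A subgroup of `Aut(T)` is self-similar if it contains all sections of its elements. -/
def SelfSimilar (H : Subgroup (TAut d)) : Prop :=
  ∀ g ∈ H, ∀ v : Vertex d, sect g v ∈ H

/-- A subgroup of `Aut(T)` is fractal if it is self-similar, level-transitive, and for every
vertex `v` the section map maps the stabilizer of `v` onto the whole group. -/
def Fractal (H : Subgroup (TAut d)) : Prop :=
  SelfSimilar H ∧ LevelTransitive H ∧
    ∀ v : Vertex d, ∀ h ∈ H, ∃ k ∈ H, (k : Equiv.Perm (Vertex d)) v = v ∧ sect k v = h

/-- The geometric product `K_n` of `K` at level `n`: elements of `St(n)` all of whose sections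
at level-`n` vertices lie in `K`. -/
def geom (K : Subgroup (TAut d)) (n : ℕ) : Subgroup (TAut d) where
  carrier := {g | g ∈ lst d n ∧ ∀ v : Vertex d, v.length = n → sect g v ∈ K}
  one_mem' := ⟨one_mem _, fun v _ => by rw [sect_one]; exact one_mem K⟩
  mul_mem' := by
    rintro g h ⟨hg1, hg2⟩ ⟨hh1, hh2⟩
    refine ⟨mul_mem hg1 hh1, fun v hv => ?_⟩
    rw [sect_mul, hh1 v hv.le]
    exact mul_mem (hg2 v hv) (hh2 v hv)
  inv_mem' := by
    rintro g ⟨hg1, hg2⟩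
    refine ⟨inv_mem hg1, fun v hv => ?_⟩
    have hfix : ((g⁻¹ : TAut d) : Equiv.Perm (Vertex d)) v = v :=
      (inv_mem hg1 : g⁻¹ ∈ lst d n) v hv.le
    have h2 : sect g v * sect g⁻¹ v = 1 := by
      have := sect_mul g g⁻¹ v
      rw [mul_inv_cancel, sect_one, hfix] at this
      exact this.symm
    rw [(inv_eq_of_mul_eq_one_right h2).symm]
    exact inv_mem (hg2 v hv)

end TreeFT
namespace TreeFT

variable {d : ℕ}

/-- The congruence topology on `Aut(T)`: the topology of pointwise convergence on the vertex
set (each vertex set carrying the discrete topology); the level stabilizers `St(n)` form a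
base of neighborhoods of the identity for it. -/
instance tautTopologicalSpace (d : ℕ) : TopologicalSpace (TAut d) :=
  TopologicalSpace.induced
    (fun g : TAut d => ((g : Equiv.Perm (Vertex d)) : Vertex d → Vertex d))
    (@Pi.topologicalSpace (Vertex d) (fun _ => Vertex d) (fun _ => ⊥))

lemma isOpen_eval (d : ℕ) (v u : Vertex d) :
    IsOpen {g : TAut d | (g : Equiv.Perm (Vertex d)) v = u} := by
  letI : TopologicalSpace (Vertex d) := ⊥
  haveI : DiscreteTopology (Vertex d) := ⟨rfl⟩
  have h : IsOpen ((fun f : Vertex d → Vertex d => f v) ⁻¹' {u}) :=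
    (continuous_apply (A := fun _ : Vertex d => Vertex d) v).isOpen_preimage ({u} : Set (Vertex d)) (isOpen_discrete _)
  exact isOpen_induced h

lemma isOpen_eval_mem (d : ℕ) (v : Vertex d) (s : Set (Vertex d)) :
    IsOpen {g : TAut d | (g : Equiv.Perm (Vertex d)) v ∈ s} := by
  have h : {g : TAut d | (g : Equiv.Perm (Vertex d)) v ∈ s}
      = ⋃ u ∈ s, {g : TAut d | (g : Equiv.Perm (Vertex d)) v = u} := by
    ext g; simp
  rw [h]
  exact isOpen_biUnion fun u _ => isOpen_eval d v u

lemma continuous_into_vertex {X : Type*} [TopologicalSpace X] (f : X → Vertex d)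
    (h : ∀ u : Vertex d, IsOpen (f ⁻¹' {u})) :
    @Continuous X (Vertex d) _ ⊥ f := by
  rw [continuous_def]
  intro s _
  have hs : f ⁻¹' s = ⋃ u ∈ s, f ⁻¹' {u} := by
    ext x; simp
  rw [hs]
  exact isOpen_biUnion fun u _ => h u

instance tautContinuousMul (d : ℕ) : ContinuousMul (TAut d) := by
  constructor
  · -- continuity of multiplication
    apply continuous_induced_rng.2
    apply @continuous_pi _ _ _ _ (fun _ => (⊥ : TopologicalSpace (Vertex d)))
    intro v
    apply continuous_into_vertex
      (f := fun p : TAut d × TAut d => ((p.1 * p.2 : TAut d) : Equiv.Perm (Vertex d)) v)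
    intro u
    have h : (fun p : TAut d × TAut d =>
          ((p.1 * p.2 : TAut d) : Equiv.Perm (Vertex d)) v) ⁻¹' {u}
        = ⋃ w : Vertex d, ({g : TAut d | (g : Equiv.Perm (Vertex d)) w = u} ×ˢ
            {h : TAut d | (h : Equiv.Perm (Vertex d)) v = w}) := by
      ext p
      simp only [Set.mem_preimage, Set.mem_singleton_iff, Set.mem_iUnion, Set.mem_prod,
        Set.mem_setOf_eq]
      constructor
      · intro hp
        exact ⟨(p.2 : Equiv.Perm (Vertex d)) v, hp, rfl⟩
      · rintro ⟨w, hw1, hw2⟩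
        show (p.1 : Equiv.Perm (Vertex d)) ((p.2 : Equiv.Perm (Vertex d)) v) = u
        rw [hw2]; exact hw1
    rw [h]
    exact isOpen_iUnion fun w => (isOpen_eval d w u).prod (isOpen_eval d v w)

instance tautContinuousInv (d : ℕ) : ContinuousInv (TAut d) := by
  constructor
  · -- continuity of inversion
    apply continuous_induced_rng.2
    apply @continuous_pi _ _ _ _ (fun _ => (⊥ : TopologicalSpace (Vertex d)))
    intro v
    apply continuous_into_vertex
      (f := fun g : TAut d => ((g⁻¹ : TAut d) : Equiv.Perm (Vertex d)) v)
    intro u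
    have h : (fun g : TAut d => ((g⁻¹ : TAut d) : Equiv.Perm (Vertex d)) v) ⁻¹' {u}
        = {g : TAut d | (g : Equiv.Perm (Vertex d)) u = v} := by
      ext g
      simp only [Set.mem_preimage, Set.mem_singleton_iff, Set.mem_setOf_eq,
        InvMemClass.coe_inv]
      constructor
      · intro hg; rw [← hg, ← Equiv.Perm.mul_apply, mul_inv_cancel, Equiv.Perm.one_apply]
      · intro hg; rw [← hg, ← Equiv.Perm.mul_apply, inv_mul_cancel, Equiv.Perm.one_apply]
    rw [h]
    exact isOpen_eval d u v

instance tautTopologicalGroup (d : ℕ) : IsTopologicalGroup (TAut d) := ⟨⟩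

/-- A subgroup of `Aut(T)` (viewed as a topological group with the congruence topology) is
topologically finitely generated if it contains a finitely generated dense subgroup. -/
def TopFG (H : Subgroup (TAut d)) : Prop :=
  ∃ S : Set ↥H, S.Finite ∧ Dense ((Subgroup.closure S : Subgroup ↥H) : Set ↥H)

/-- A profinite group is just-infinite if it is infinite and every nontrivial closed normal
subgroup has finite index. -/
def JustInfinite (H : Subgroup (TAut d)) : Prop :=
  Infinite ↥H ∧ ∀ N : Subgroup ↥H, N.Normal → IsClosed (N : Set ↥H) → N ≠ ⊥ → N.index ≠ 0

/-- A profinite group is strongly complete if every subgroup of finite index is open. -/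
def StronglyComplete (H : Subgroup (TAut d)) : Prop :=
  ∀ N : Subgroup ↥H, N.index ≠ 0 → IsOpen (N : Set ↥H)

end TreeFT

/-!
With `u = g⁻¹ v`, the section of `g h g⁻¹` at `v` is `g|_{h u} · h|_u · (g|_u)⁻¹`. Modulo `St(D)`
this is `(A p A⁻¹)(A B⁻¹)`, where `p` is the pattern of `h` at `u` and `A`, `B` are the patterns of
`g` at the same-level vertices `h u`, `u`: the first factor lies in `Q` by (a), the second by (b).
Conditions (a) and (b) for `g` imply them for `g⁻¹` with `P` and `Q` exchanged, which gives the
reverse inclusion. Conjugation is a homeomorphism of `Aut(T)`, so it restricts to an isomorphism of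
topological groups `G_P ≃ G_Q`.
-/

section ConjugateSubgroup

variable {G : Type*} [Group G] [TopologicalSpace G] [IsTopologicalGroup G]

theorem exists_continuous_mulEquiv_of_map_conj {H K : Subgroup G} {g : G}
    (hHK : H.map (MulAut.conj g).toMonoidHom = K) :
    ∃ e : H ≃* K, Continuous ⇑e ∧ Continuous ⇑e.symm := by
  refine ⟨((MulAut.conj g).subgroupMap H).trans (MulEquiv.subgroupCongr hHK), ?_, ?_⟩
  · exact ((continuous_const.mul continuous_subtype_val).mul continuous_const).subtype_mk _
  · exact ((continuous_const.mul continuous_subtype_val).mul continuous_const).subtype_mk _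

end ConjugateSubgroup

namespace TreeFT

section Conjugation

variable {d D : ℕ}

theorem sect_inv (g : TAut d) (v : Vertex d) :
    sect g⁻¹ v = (sect g (((g⁻¹ : TAut d) : Equiv.Perm (Vertex d)) v))⁻¹ := by
  refine (inv_eq_of_mul_eq_one_right ?_).symm
  rw [← sect_mul, mul_inv_cancel, sect_one]

theorem sect_conj (g h : TAut d) (v : Vertex d) :
    let u := ((g⁻¹ : TAut d) : Equiv.Perm (Vertex d)) v
    sect (g * h * g⁻¹) v = sect g ((h : Equiv.Perm (Vertex d)) u) * sect h u * (sect g u)⁻¹ := by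
  rw [sect_mul, sect_mul, sect_inv]

variable {P Q : Subgroup (FAut d D)} {g : TAut d}

theorem map_conj_gft_le
    (ha : ∀ v : Vertex d, P.map (MulAut.conj (proj d D (sect g v))).toMonoidHom ≤ Q)
    (hb : ∀ v w : Vertex d, v.length = w.length →
      proj d D (sect g v) * (proj d D (sect g w))⁻¹ ∈ Q) :
    (gft d D P).map (MulAut.conj g).toMonoidHom ≤ gft d D Q := by
  rintro _ ⟨h, hh, rfl⟩ v
  change proj d D (sect (g * h * g⁻¹) v) ∈ Q
  rw [sect_conj, map_mul, map_mul, map_inv]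
  set u := ((g⁻¹ : TAut d) : Equiv.Perm (Vertex d)) v
  set A := proj d D (sect g ((h : Equiv.Perm (Vertex d)) u))
  set B := proj d D (sect g u)
  have hconj : A * proj d D (sect h u) * A⁻¹ ∈ Q := ha _ ⟨_, hh u, rfl⟩
  have hlevel : A * B⁻¹ ∈ Q := hb _ _ (length_apply h u)
  have hsplit : A * proj d D (sect h u) * B⁻¹ = (A * proj d D (sect h u) * A⁻¹) * (A * B⁻¹) := by
    group
  exact hsplit ▸ mul_mem hconj hlevel

theorem map_conj_proj_sect_inv
    (ha : ∀ v : Vertex d, P.map (MulAut.conj (proj d D (sect g v))).toMonoidHom = Q)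
    (v : Vertex d) :
    Q.map (MulAut.conj (proj d D (sect g⁻¹ v))).toMonoidHom = P := by
  rw [sect_inv, map_inv, map_inv, MulAut.inv_def]
  simp only [MulEquiv.toMonoidHom_eq_coe] at ha ⊢
  exact (Subgroup.map_symm_eq_iff_map_eq _).mpr (ha _)

theorem proj_sect_inv_mul_inv_mem
    (ha : ∀ v : Vertex d, P.map (MulAut.conj (proj d D (sect g v))).toMonoidHom = Q)
    (hb : ∀ v w : Vertex d, v.length = w.length →
      proj d D (sect g v) * (proj d D (sect g w))⁻¹ ∈ Q)
    (v w : Vertex d) (hvw : v.length = w.length) :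
    proj d D (sect g⁻¹ v) * (proj d D (sect g⁻¹ w))⁻¹ ∈ P := by
  rw [sect_inv, sect_inv, map_inv, map_inv, inv_inv]
  set u := ((g⁻¹ : TAut d) : Equiv.Perm (Vertex d)) v
  set u' := ((g⁻¹ : TAut d) : Equiv.Perm (Vertex d)) w
  have hlevel : proj d D (sect g u') * (proj d D (sect g u))⁻¹ ∈ Q :=
    hb _ _ (by simp only [u, u', length_apply, hvw])
  rw [← ha u, Subgroup.mem_map_equiv, MulAut.conj_symm_apply] at hlevel
  convert hlevel using 1
  simp only [mul_assoc, inv_mul_cancel, mul_one]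

theorem map_conj_gft
    (ha : ∀ v : Vertex d, P.map (MulAut.conj (proj d D (sect g v))).toMonoidHom = Q)
    (hb : ∀ v w : Vertex d, v.length = w.length →
      proj d D (sect g v) * (proj d D (sect g w))⁻¹ ∈ Q) :
    (gft d D P).map (MulAut.conj g).toMonoidHom = gft d D Q := by
  refine le_antisymm (map_conj_gft_le (fun v => (ha v).le) hb) ?_
  have hinv : (gft d D Q).map (MulAut.conj g⁻¹).toMonoidHom ≤ gft d D P :=
    map_conj_gft_le (fun v => (map_conj_proj_sect_inv ha v).le) (proj_sect_inv_mul_inv_mem ha hb)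
  rwa [Subgroup.map_equiv_eq_comap_symm', ← Subgroup.map_le_iff_le_comap, ← MulAut.inv_def,
    ← map_inv]

end Conjugation

theorem statement_16_general (d D : ℕ) (P Q : Subgroup (FAut d D))
    (g : TAut d)
    (ha : ∀ v : Vertex d,
      P.map (MulAut.conj (proj d D (sect g v))).toMonoidHom = Q)
    (hb : ∀ v w : Vertex d, v.length = w.length →
      proj d D (sect g v) * (proj d D (sect g w))⁻¹ ∈ Q) :
    (gft d D P).map (MulAut.conj g).toMonoidHom = gft d D Q ∧
      ∃ e : ↥(gft d D P) ≃* ↥(gft d D Q), Continuous ⇑e ∧ Continuous ⇑e.symm :=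
  ⟨map_conj_gft ha hb, exists_continuous_mulEquiv_of_map_conj (map_conj_gft ha hb)⟩

/-- Let `P, Q ≤ Aut(T^D)` be minimal pattern subgroups and suppose some
`g ∈ Aut(T)` satisfies (a) `(g|_v^D) P (g|_v^D)⁻¹ = Q` for every vertex `v`, and
(b) `(g|_v^D)(g|_w^D)⁻¹ ∈ Q` for all vertices `v, w` of the same level.  Then conjugation by
`g` maps `G_P` onto `G_Q`; in particular `G_P` and `G_Q` are isomorphic as topological
groups. -/
theorem statement_16 (d D : ℕ) (hD : 1 ≤ D) (P Q : Subgroup (FAut d D))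
    (hminP : IsMinimalPattern d D P) (hminQ : IsMinimalPattern d D Q)
    (g : TAut d)
    (ha : ∀ v : Vertex d,
      P.map (MulAut.conj (proj d D (sect g v))).toMonoidHom = Q)
    (hb : ∀ v w : Vertex d, v.length = w.length →
      proj d D (sect g v) * (proj d D (sect g w))⁻¹ ∈ Q) :
    (gft d D P).map (MulAut.conj g).toMonoidHom = gft d D Q ∧
      ∃ e : ↥(gft d D P) ≃* ↥(gft d D Q), Continuous ⇑e ∧ Continuous ⇑e.symm :=
  statement_16_general d D P Q g ha hb

end TreeFT
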